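/- arXiv:2112.05649 — 3 statements merged into one kernel-verified Lean document; each statement's English description precedes it below -/
import Mathlib

section
/- For every odd positive integer k and every nonnegative integer n, σ_k(8n+7) ≡ 0 (mod 8). -/
/-! Writing m = 8n + 7, the divisors of m pair off as d ↔ m / d. Since every odd residue mod 8
squares to 1, d * (m / d) ≡ -1 forces m / d ≡ -d (mod 8), so for odd k the two terms
d ^ k and (m / d) ^ k cancel mod 8. No divisor is its own partner, because 7 is not a square
mod 8. -/

def sigma (k n : ℕ) : ℕ := ∑ d ∈ n.divisors, d ^ k

theorem Nat.sum_divisors_eq_zero_of_add_div_eq_zero {M : Type*} [AddCommMonoid M] {m : ℕ}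
    (hm : ¬IsSquare m) (f : ℕ → M) (hf : ∀ d, d ∣ m → f d + f (m / d) = 0) :
    ∑ d ∈ m.divisors, f d = 0 := by
  have hm0 : m ≠ 0 := by rintro rfl; exact hm ⟨0, rfl⟩
  refine Finset.sum_involution (fun d _ => m / d) (fun d hd => hf d (Nat.dvd_of_mem_divisors hd))
    (fun d hd _ hdd => hm ⟨d, ?_⟩) (fun d hd => ?_) (fun d hd => ?_)
  · rw [← Nat.div_mul_cancel (Nat.dvd_of_mem_divisors hd), hdd]
  · exact Nat.mem_divisors.mpr ⟨Nat.div_dvd_of_dvd (Nat.dvd_of_mem_divisors hd), hm0⟩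
  · exact Nat.div_div_self (Nat.dvd_of_mem_divisors hd) hm0

theorem ZMod.eq_neg_of_mul_eq_seven {a b : ZMod 8} : a * b = 7 → b = -a := by
  revert a b; decide

theorem ZMod.mul_self_ne_seven (a : ZMod 8) : a * a ≠ 7 := by
  revert a; decide

section CongruentSevenModEight

variable {m : ℕ} (hm : (m : ZMod 8) = 7)
include hm

theorem not_isSquare_of_cast_eq_seven : ¬IsSquare m := by
  rintro ⟨r, rfl⟩
  exact ZMod.mul_self_ne_seven r (by exact_mod_cast hm)

theorem cast_div_eq_neg_of_cast_eq_seven {d : ℕ} (hd : d ∣ m) :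
    ((m / d : ℕ) : ZMod 8) = -d :=
  ZMod.eq_neg_of_mul_eq_seven (by rw [← Nat.cast_mul, Nat.mul_div_cancel' hd, hm])

end CongruentSevenModEight

theorem sigma_eight_n_seven_general (k n : ℕ) (hodd : Odd k) :
    sigma k (8 * n + 7) % 8 = 0 := by
  have hm : ((8 * n + 7 : ℕ) : ZMod 8) = 7 := by
    push_cast
    rw [show (8 : ZMod 8) = 0 from rfl, zero_mul, zero_add]
  rw [← Nat.dvd_iff_mod_eq_zero, ← ZMod.natCast_eq_zero_iff, sigma, Nat.cast_sum]
  refine Nat.sum_divisors_eq_zero_of_add_div_eq_zero (not_isSquare_of_cast_eq_seven hm) _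
    fun d hd => ?_
  rw [Nat.cast_pow, Nat.cast_pow, cast_div_eq_neg_of_cast_eq_seven hm hd, hodd.neg_pow,
    add_neg_cancel]

theorem sigma_eight_n_seven (k n : ℕ) (hk : 0 < k) (hodd : Odd k) :
    sigma k (8 * n + 7) % 8 = 0 :=
  sigma_eight_n_seven_general k n hodd
end

section
/- If k is a positive integer with k ≡ 3 (mod 6), then for every nonnegative integer n and every b ∈ {3, 5, 6}, σ_k(7n+b) ≡ 0 (mod 7). -/
/-! For `d ∣ m` with `m` a quadratic non-residue modulo an odd prime `p`, the cofactor `m / d` has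
the opposite Legendre symbol, and for `k ≡ (p - 1) / 2 (mod p - 1)` Euler's criterion makes `d ^ k`
that symbol. So the terms of `d` and `m / d` in `σ_k(m)` cancel modulo `p`; summing the pairing over
all divisors gives `2 σ_k(m) ≡ 0`. For `p = 7` the non-residues are `3, 5, 6`. -/

theorem Nat.sum_divisors_eq_zero_of_add_div_eq_zero_s7 {R : Type*} [Semiring R] [NoZeroDivisors R]
    [NeZero (2 : R)] {n : ℕ} {f : ℕ → R} (h : ∀ d ∈ n.divisors, f d + f (n / d) = 0) :
    ∑ d ∈ n.divisors, f d = 0 := by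
  have htwice : 2 * ∑ d ∈ n.divisors, f d = 0 := by
    rw [two_mul]
    nth_rewrite 2 [← Nat.sum_div_divisors]
    rw [← Finset.sum_add_distrib]
    exact Finset.sum_eq_zero h
  exact (_root_.mul_eq_zero.mp htwice).resolve_left two_ne_zero

namespace ZMod

variable {p : ℕ} [Fact p.Prime]

theorem pow_mod_card_sub_one {a : ZMod p} (ha : a ≠ 0) (k : ℕ) : a ^ (k % (p - 1)) = a ^ k := by
  conv_rhs => rw [← Nat.mod_add_div k (p - 1), pow_add, pow_mul, pow_card_sub_one_eq_one ha,
    one_pow, mul_one]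

theorem pow_add_pow_eq_zero_of_not_isSquare_mul {k : ℕ} (hk : k % (p - 1) = p / 2)
    {x y : ZMod p} (hxy : ¬IsSquare (x * y)) : x ^ k + y ^ k = 0 := by
  have hx : x ≠ 0 := by rintro rfl; exact hxy ⟨0, by simp⟩
  have hy : y ≠ 0 := by rintro rfl; exact hxy ⟨0, by simp⟩
  have hxy_pow : (x * y) ^ (p / 2) = -1 :=
    (pow_div_two_eq_neg_one_or_one p (mul_ne_zero hx hy)).resolve_left
      (mt (euler_criterion p (mul_ne_zero hx hy)).mpr hxy)
  have hy_sq : y ^ (p / 2) * y ^ (p / 2) = 1 :=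
    mul_self_eq_one_iff.mpr (pow_div_two_eq_neg_one_or_one p hy)
  rw [← pow_mod_card_sub_one hx, ← pow_mod_card_sub_one hy, hk]
  linear_combination y ^ (p / 2) * hxy_pow - x ^ (p / 2) * hy_sq

end ZMod

theorem dvd_sigma_of_not_isSquare {p k m : ℕ} [Fact p.Prime] (hk : k % (p - 1) = p / 2)
    (hm : ¬IsSquare (m : ZMod p)) : p ∣ sigma k m := by
  have hp : p ≠ 2 := by rintro rfl; omega
  have : NeZero (2 : ZMod p) := ⟨Ring.two_ne_zero (by rwa [ZMod.ringChar_zmod_n])⟩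
  rw [← ZMod.natCast_eq_zero_iff, sigma, Nat.cast_sum]
  refine Nat.sum_divisors_eq_zero_of_add_div_eq_zero_s7 fun d hd => ?_
  push_cast
  refine ZMod.pow_add_pow_eq_zero_of_not_isSquare_mul hk ?_
  rwa [← Nat.cast_mul, Nat.mul_div_cancel' (Nat.dvd_of_mem_divisors hd)]

theorem sigma_seven_n_general (k : ℕ) (hk3 : k % 6 = 3) :
    ∀ n : ℕ, ∀ b ∈ ({3, 5, 6} : Finset ℕ), sigma k (7 * n + b) % 7 = 0 := by
  intro n b hb
  have hcast : ((7 * n + b : ℕ) : ZMod 7) = b := by simp [show (7 : ZMod 7) = 0 from rfl]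
  have hnonsq : ¬IsSquare ((7 * n + b : ℕ) : ZMod 7) := by
    rw [hcast, isSquare_iff_exists_sq]
    simp only [Finset.mem_insert, Finset.mem_singleton] at hb
    rcases hb with rfl | rfl | rfl <;> decide
  have : Fact (Nat.Prime 7) := ⟨by norm_num⟩
  exact Nat.mod_eq_zero_of_dvd (dvd_sigma_of_not_isSquare hk3 hnonsq)

theorem sigma_seven_n (k : ℕ) (hk : 0 < k) (hk3 : k % 6 = 3) :
    ∀ n : ℕ, ∀ b ∈ ({3, 5, 6} : Finset ℕ), sigma k (7 * n + b) % 7 = 0 :=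
  sigma_seven_n_general k hk3
end

section
/- Suppose σ₀(An + B) ≡ 0 (mod 2^k) for all nonnegative integers n, where A, B, k are positive integers. Then there exist primes p₁ ≤ p₂ ≤ ⋯ ≤ p_{k-1} such that (p₁p₂⋯p_{k-1})² divides A and p₁p₂⋯p_{k-1} divides B. -/
/-!
Write `gcd A B = d₁ * d₂`, where every prime of `d₁` divides `a = A / gcd A B` and `d₂` is coprime
to `a`. By Dirichlet's theorem some `A * n + B` equals `d₁ * d₂ ^ 2 * p` for a large prime `p`, and
its number of divisors is `2 * σ₀ d₁` times the odd number `σ₀ (d₂ ^ 2)`; hence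
`2 ^ (k - 1) ∣ σ₀ d₁ = ∏ (e_q + 1)`. As `v₂ (e + 1) ≤ (e + 1) / 2`, one can pick `k - 1` primes of
`d₁`, each `q` at most `(e_q + 1) / 2` times; their product divides `d₁ ∣ B`, and its square divides
`d₁ * rad d₁ ∣ A`.
-/

open Finset

theorem Multiset.exists_monotone_fin_prod_eq {α : Type*} [CommMonoid α] [LinearOrder α]
    {n : ℕ} (T : Multiset α) (hT : card T = n) :
    ∃ f : Fin n → α, Monotone f ∧ (∀ i, f i ∈ T) ∧ ∏ i, f i = T.prod := by
  set l := T.sort (· ≤ ·)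
  have hl : l.length = n := by rw [Multiset.length_sort, hT]
  refine ⟨fun i => l.get (i.cast hl.symm), fun i j hij => ?_, fun i => ?_, ?_⟩
  · exact (T.pairwise_sort _).rel_get_of_le hij
  · exact (T.mem_sort _).mp (List.get_mem l _)
  · calc ∏ i, l.get (i.cast hl.symm) = ∏ j : Fin l.length, l.get j :=
          Fintype.prod_equiv (finCongr hl.symm) _ _ fun _ => rfl
      _ = T.prod := by rw [← List.prod_ofFn, List.ofFn_get, ← Multiset.prod_coe, T.sort_eq]

namespace Nat

theorem factorization_two_le_div_two {x : ℕ} (hx : x ≠ 0) : x.factorization 2 ≤ x / 2 := by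
  set t := x.factorization 2
  have htx : 2 ^ t ≤ x := ordProj_le 2 hx
  have ht : 2 * t ≤ 2 ^ t := by
    rcases t with _ | s
    · simp
    · have := s.lt_two_pow_self
      rw [pow_succ]
      omega
  rw [Nat.le_div_iff_mul_le two_pos]
  omega

theorem le_sum_div_two_of_two_pow_dvd_prod {ι : Type*} {s : Finset ι} {x : ι → ℕ} {j : ℕ}
    (hx : ∀ i ∈ s, x i ≠ 0) (h : 2 ^ j ∣ ∏ i ∈ s, x i) : j ≤ ∑ i ∈ s, x i / 2 :=
  calc j ≤ (∏ i ∈ s, x i).factorization 2 :=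
        (prime_two.pow_dvd_iff_le_factorization (prod_ne_zero_iff.mpr hx)).mp h
    _ = ∑ i ∈ s, (x i).factorization 2 := by
        rw [factorization_prod hx, Finsupp.finsetSum_apply]
    _ ≤ ∑ i ∈ s, x i / 2 := sum_le_sum fun i hi => factorization_two_le_div_two (hx i hi)

theorem exists_multiset_of_two_pow_dvd_card_divisors {m j : ℕ} (hm : m ≠ 0)
    (h : 2 ^ j ∣ #m.divisors) :
    ∃ T : Multiset ℕ, Multiset.card T = j ∧ (∀ q ∈ T, q.Prime) ∧ T.prod ∣ m ∧
      T.prod ^ 2 ∣ m * ∏ q ∈ m.primeFactors, q := by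
  set e := m.factorization
  set S : Multiset ℕ := ∑ q ∈ m.primeFactors, Multiset.replicate ((e q + 1) / 2) q
  have hjS : j ≤ Multiset.card S := by
    rw [card_divisors hm] at h
    simpa [S] using le_sum_div_two_of_two_pow_dvd_prod (fun q _ => succ_ne_zero (e q)) h
  have hpos : 0 < Multiset.card (S.powersetCard j) := by
    rw [Multiset.card_powersetCard]
    exact choose_pos hjS
  obtain ⟨T, hT⟩ := Multiset.card_pos_iff_exists_mem.mp hpos
  obtain ⟨hTS, hTcard⟩ := Multiset.mem_powersetCard.mp hT
  have hSprod : S.prod = ∏ q ∈ m.primeFactors, q ^ ((e q + 1) / 2) := by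
    simp [S, Multiset.prod_sum]
  have hm_eq : m = ∏ q ∈ m.primeFactors, q ^ e q := prod_primeFactors_pow_factorization hm
  refine ⟨T, hTcard, fun q hq => ?_, ?_, ?_⟩
  · obtain ⟨p, hp, hqp⟩ := Multiset.mem_sum.mp (Multiset.mem_of_le hTS hq)
    rw [Multiset.eq_of_mem_replicate hqp]
    exact prime_of_mem_primeFactors hp
  · calc T.prod ∣ S.prod := Multiset.prod_dvd_prod_of_le hTS
      _ ∣ ∏ q ∈ m.primeFactors, q ^ e q := by
          rw [hSprod]
          exact prod_dvd_prod_of_dvd _ _ fun q _ => pow_dvd_pow q (by omega)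
      _ = m := hm_eq.symm
  · calc T.prod ^ 2 ∣ S.prod ^ 2 := pow_dvd_pow_of_dvd (Multiset.prod_dvd_prod_of_le hTS) 2
      _ ∣ ∏ q ∈ m.primeFactors, q ^ (e q + 1) := by
          rw [hSprod, ← prod_pow]
          refine prod_dvd_prod_of_dvd _ _ fun q _ => ?_
          rw [← pow_mul]
          exact pow_dvd_pow q (by omega)
      _ = m * ∏ q ∈ m.primeFactors, q := by
          simp only [pow_succ, prod_mul_distrib, ← hm_eq]

theorem odd_card_divisors_sq {r : ℕ} (hr : r ≠ 0) : Odd #(r ^ 2).divisors := by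
  rw [card_divisors (pow_ne_zero 2 hr)]
  exact prod_induction _ Odd (fun _ _ => Odd.mul) odd_one fun q _ => by
    simp [factorization_pow]

theorem two_pow_dvd_card_divisors_of_mul_sq_mul_prime {m r p j : ℕ} (hmr : m.Coprime r)
    (hr : r ≠ 0) (hp : p.Prime) (hpmr : ¬ p ∣ m * r)
    (h : 2 ^ (j + 1) ∣ #(m * r ^ 2 * p).divisors) : 2 ^ j ∣ #m.divisors := by
  have hpm : (m * r ^ 2).Coprime p := by
    refine (Coprime.mul_right ?_ (Coprime.pow_right 2 ?_)).symm <;>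
      refine hp.coprime_iff_not_dvd.mpr fun hdvd => hpmr ?_
    exacts [dvd_mul_of_dvd_left hdvd r, dvd_mul_of_dvd_right hdvd m]
  rw [hpm.card_divisors_mul, (hmr.pow_right 2).card_divisors_mul, hp.divisors,
    card_pair hp.one_lt.ne, pow_succ] at h
  exact (Coprime.pow_left j (coprime_two_left.mpr (odd_card_divisors_sq hr))).dvd_of_dvd_mul_right
    (Nat.dvd_of_mul_dvd_mul_right two_pos h)

theorem exists_mul_eq_primeFactors_dvd_coprime (d a : ℕ) :
    ∃ d₁ d₂, d₁ * d₂ = d ∧ (∀ q ∈ d₁.primeFactors, q ∣ a) ∧ d₂.Coprime a := by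
  induction d using induction_on_primes with
  | zero => exact ⟨0, 1, rfl, by simp, coprime_one_left a⟩
  | one => exact ⟨1, 1, rfl, by simp, coprime_one_left a⟩
  | prime_mul p d hp ih =>
    obtain ⟨d₁, d₂, rfl, hd₁, hd₂⟩ := ih
    by_cases hpa : p ∣ a
    · refine ⟨p * d₁, d₂, by ring, fun q hq => ?_, hd₂⟩
      rcases eq_or_ne d₁ 0 with rfl | hd₁0
      · simp at hq
      rw [primeFactors_mul hp.ne_zero hd₁0, hp.primeFactors, mem_union, mem_singleton] at hq
      rcases hq with rfl | hq
      exacts [hpa, hd₁ q hq]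
    · exact ⟨d₁, p * d₂, by ring, hd₁, Coprime.mul_left (hp.coprime_iff_not_dvd.mpr hpa) hd₂⟩

theorem exists_mul_add_eq_mul_prime {a b c : ℕ} (ha : a ≠ 0) (hb : b.Coprime a)
    (hc : c.Coprime a) (hc0 : c ≠ 0) (N : ℕ) :
    ∃ n p, p.Prime ∧ N < p ∧ a * n + b = c * p := by
  have : NeZero a := ⟨ha⟩
  have hbu := (ZMod.isUnit_iff_coprime b a).mpr hb
  have hcu := (ZMod.isUnit_iff_coprime c a).mpr hc
  obtain ⟨p, hpN, hp, hpmod⟩ :=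
    forall_exists_prime_gt_and_eq_mod (hcu.unit⁻¹ * hbu.unit).isUnit (N + b)
  have hbcp : b ≤ c * p := by nlinarith [Nat.pos_of_ne_zero hc0]
  have hdvd : a ∣ c * p - b := by
    rw [← ZMod.natCast_eq_zero_iff, Nat.cast_sub hbcp, Nat.cast_mul, hpmod, Units.val_mul,
      ← mul_assoc, IsUnit.mul_val_inv, one_mul, IsUnit.unit_spec, sub_self]
  obtain ⟨n, hn⟩ := hdvd
  exact ⟨n, p, hp, by omega, by omega⟩

theorem exists_two_pow_dvd_card_divisors_of_forall {A B j : ℕ} (hA : A ≠ 0)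
    (h : ∀ n, 2 ^ (j + 1) ∣ #(A * n + B).divisors) :
    ∃ m ≠ 0, 2 ^ j ∣ #m.divisors ∧ m * ∏ q ∈ m.primeFactors, q ∣ A ∧ m ∣ B := by
  obtain ⟨a, b, hab, hAd, hBd⟩ := exists_coprime A B
  set d := A.gcd B
  have hd : d ≠ 0 := (gcd_pos_of_pos_left B (Nat.pos_of_ne_zero hA)).ne'
  have ha : a ≠ 0 := by rintro rfl; simp_all
  obtain ⟨d₁, d₂, hd₁₂, hd₁a, hd₂a⟩ := exists_mul_eq_primeFactors_dvd_coprime d a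
  have hd₁ : d₁ ≠ 0 := left_ne_zero_of_mul (hd₁₂ ▸ hd)
  have hd₂ : d₂ ≠ 0 := right_ne_zero_of_mul (hd₁₂ ▸ hd)
  have hd₁d₂ : d₁.Coprime d₂ := coprime_of_dvd fun q hq hqd₁ hqd₂ =>
    hq.one_lt.ne' ((hd₂a.coprime_dvd_left hqd₂).eq_one_of_dvd
      (hd₁a q (mem_primeFactors.mpr ⟨hq, hqd₁, hd₁⟩)))
  obtain ⟨n, p, hp, hdp, hn⟩ := exists_mul_add_eq_mul_prime ha hab.symm hd₂a hd₂ (d₁ * d₂)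
  have hAn : A * n + B = d₁ * d₂ ^ 2 * p := by
    rw [hAd, hBd, ← hd₁₂]
    calc a * (d₁ * d₂) * n + b * (d₁ * d₂) = d₁ * d₂ * (a * n + b) := by ring
      _ = d₁ * d₂ ^ 2 * p := by rw [hn]; ring
  have hd₁d : d₁ ∣ d := hd₁₂ ▸ dvd_mul_right d₁ d₂
  refine ⟨d₁, hd₁, ?_, ?_, hd₁d.trans (hBd ▸ dvd_mul_left d b)⟩
  · exact two_pow_dvd_card_divisors_of_mul_sq_mul_prime hd₁d₂ hd₂ hp
      (fun hpd => (le_of_dvd (by positivity) hpd).not_gt hdp) (hAn ▸ h n)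
  · have hrad : ∏ q ∈ d₁.primeFactors, q ∣ a :=
      prod_primes_dvd a (fun q hq => (prime_of_mem_primeFactors hq).prime) hd₁a
    calc d₁ * ∏ q ∈ d₁.primeFactors, q ∣ d * a := mul_dvd_mul hd₁d hrad
      _ = A := by rw [hAd, mul_comm]

end Nat

theorem merca_conjecture_general (A B k : ℕ) (hA : 0 < A) (hk : 0 < k)
    (h : ∀ n : ℕ, (A * n + B).divisors.card % 2 ^ k = 0) :
    ∃ p : Fin (k - 1) → ℕ, (∀ i, (p i).Prime) ∧ Monotone p ∧
      (∏ i, p i) ^ 2 ∣ A ∧ (∏ i, p i) ∣ B := by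
  obtain ⟨m, hm, hmσ, hmA, hmB⟩ := Nat.exists_two_pow_dvd_card_divisors_of_forall hA.ne'
    fun n => Nat.sub_add_cancel hk ▸ Nat.dvd_of_mod_eq_zero (h n)
  obtain ⟨T, hTcard, hTprime, hTm, hTsq⟩ := Nat.exists_multiset_of_two_pow_dvd_card_divisors hm hmσ
  obtain ⟨f, hf_mono, hf_mem, hf_prod⟩ := T.exists_monotone_fin_prod_eq hTcard
  refine ⟨f, fun i => hTprime _ (hf_mem i), hf_mono, ?_, ?_⟩ <;> rw [hf_prod]
  exacts [hTsq.trans hmA, hTm.trans hmB]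

theorem merca_conjecture (A B k : ℕ) (hA : 0 < A) (hB : 0 < B) (hk : 0 < k)
    (h : ∀ n : ℕ, (A * n + B).divisors.card % 2 ^ k = 0) :
    ∃ p : Fin (k - 1) → ℕ, (∀ i, (p i).Prime) ∧ Monotone p ∧
      (∏ i, p i) ^ 2 ∣ A ∧ (∏ i, p i) ∣ B :=
  merca_conjecture_general A B k hA hk h
end
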